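/- Let n ≥ 4 be an even integer and let T_n be the simple graph on the vertex set (ℤ/nℤ)² in which x is adjacent to y if and only if x − y lies in the image of {(1,0),(−1,0),(0,1),(0,−1)} modulo n (the n×n torus grid graph). Then the number of permutations g of (ℤ/nℤ)² with g(x) − x in the image of {(1,0),(−1,0),(0,1),(0,−1)} modulo n for all x equals the square of the number of perfect matchings of T_n. -/

import Mathlib

/-!
For even `n` the torus graph is bipartite, `x ↦ x.1 + x.2 mod 2` being a proper 2-colouring.
In a bipartite graph, a permutation `g` sending every vertex to a neighbour splits into the two
perfect matchings `{x, g x}` with `x` black and `{x, g x}` with `x` white; conversely a pair of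
perfect matchings `(M_black, M_white)` gives back `g`, sending a vertex of colour `b` to its
partner in `M_b`.
-/

/-- A perfect matching of a simple undirected graph: a set of edges of the graph
such that every vertex belongs to exactly one edge of the set. -/
def IsPerfectMatching {W : Type*} (G : SimpleGraph W) (M : Set (Sym2 W)) : Prop :=
  M ⊆ G.edgeSet ∧ ∀ v : W, ∃! e, e ∈ M ∧ v ∈ e

/-- The restricting set `A_+ = {(1,0),(−1,0),(0,1),(0,−1)} ⊆ ℤ²`. -/
def A_plus : Set (ℤ × ℤ) := {(1, 0), (-1, 0), (0, 1), (0, -1)}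

/-- `F_+(n)`: the number of permutations `g` of the discrete torus `(ℤ/nℤ)²` with
`g x − x` in the image of `A_+` modulo `n` for all `x`. -/
noncomputable def Fplus (n : ℕ) : ℕ :=
  Set.ncard {g : Equiv.Perm (ZMod n × ZMod n) |
    ∀ x : ZMod n × ZMod n,
      g x - x ∈ (fun p : ℤ × ℤ => ((p.1 : ZMod n), (p.2 : ZMod n))) '' A_plus}

open SimpleGraph Equiv

namespace IsPerfectMatching

variable {W : Type*} {G : SimpleGraph W} {M M' : Set (Sym2 W)}

theorem existsUnique_partner (hM : IsPerfectMatching G M) (v : W) : ∃! w, s(v, w) ∈ M := by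
  obtain ⟨e, ⟨heM, hve⟩, huniq⟩ := hM.2 v
  obtain ⟨w, rfl⟩ := Sym2.mem_iff_exists.mp hve
  exact ⟨w, heM, fun u hu => Sym2.congr_right.mp (huniq s(v, u) ⟨hu, Sym2.mem_mk_left v u⟩)⟩

theorem of_existsUnique_partner (hMG : M ⊆ G.edgeSet) (hM : ∀ v, ∃! w, s(v, w) ∈ M) :
    IsPerfectMatching G M := by
  refine ⟨hMG, fun v => ?_⟩
  obtain ⟨w, hw, huniq⟩ := hM v
  refine ⟨s(v, w), ⟨hw, Sym2.mem_mk_left v w⟩, fun e ⟨he, hve⟩ => ?_⟩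
  obtain ⟨u, rfl⟩ := Sym2.mem_iff_exists.mp hve
  rw [huniq u he]

noncomputable def partner (hM : IsPerfectMatching G M) (v : W) : W :=
  (hM.existsUnique_partner v).exists.choose

theorem mk_partner_mem (hM : IsPerfectMatching G M) (v : W) : s(v, hM.partner v) ∈ M :=
  (hM.existsUnique_partner v).exists.choose_spec

theorem eq_partner_of_mk_mem (hM : IsPerfectMatching G M) {v w : W} (h : s(v, w) ∈ M) :
    w = hM.partner v :=
  (hM.existsUnique_partner v).unique h (hM.mk_partner_mem v)

theorem partner_partner (hM : IsPerfectMatching G M) (v : W) : hM.partner (hM.partner v) = v :=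
  (hM.eq_partner_of_mk_mem (Sym2.eq_swap ▸ hM.mk_partner_mem v)).symm

theorem adj_partner (hM : IsPerfectMatching G M) (v : W) : G.Adj v (hM.partner v) :=
  hM.1 (hM.mk_partner_mem v)

theorem eq_of_subset (hM : IsPerfectMatching G M) (hM' : IsPerfectMatching G M') (h : M ⊆ M') :
    M = M' := by
  refine h.antisymm fun e he => ?_
  induction e using Sym2.ind with
  | _ v w =>
    rw [hM'.eq_partner_of_mk_mem he, ← hM'.eq_partner_of_mk_mem (h (hM.mk_partner_mem v))]
    exact hM.mk_partner_mem v

end IsPerfectMatching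

namespace SimpleGraph.Coloring

variable {W : Type*} {G : SimpleGraph W}

theorem eq_not_of_adj (C : G.Coloring Bool) {v w : W} (h : G.Adj v w) : C w = !C v :=
  Bool.eq_not_of_ne (C.valid h).symm

def edgesFrom (C : G.Coloring Bool) (g : W → W) (b : Bool) : Set (Sym2 W) :=
  (fun x => s(x, g x)) '' {x | C x = b}

noncomputable def permOfMatchings (C : G.Coloring Bool) {M : Bool → Set (Sym2 W)}
    (hM : ∀ b, IsPerfectMatching G (M b)) : Perm W where
  toFun v := (hM (C v)).partner v
  invFun v := (hM (!C v)).partner v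
  left_inv v := by
    dsimp only
    rw [C.eq_not_of_adj ((hM _).adj_partner v), Bool.not_not, (hM _).partner_partner]
  right_inv v := by
    dsimp only
    rw [C.eq_not_of_adj ((hM _).adj_partner v), (hM _).partner_partner]

section

variable {C : G.Coloring Bool}

theorem mk_mem_edgesFrom_iff {g : W → W} (hg : ∀ x, G.Adj x (g x)) {b : Bool} {v w : W}
    (hv : C v = b) : s(v, w) ∈ C.edgesFrom g b ↔ w = g v := by
  refine ⟨fun ⟨x, hx, he⟩ => ?_, fun h => ⟨v, hv, h ▸ rfl⟩⟩
  rcases Sym2.eq_iff.mp he with ⟨rfl, rfl⟩ | ⟨rfl, rfl⟩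
  · rfl
  · simp_all [C.eq_not_of_adj (hg x)]

theorem edgesFrom_eq_edgesFrom_symm {g : Perm W} (hg : ∀ x, G.Adj x (g x)) (b : Bool) :
    C.edgesFrom g b = C.edgesFrom g.symm (!b) := by
  have hflip (x : W) : C (g x) = !C x := C.eq_not_of_adj (hg x)
  ext e
  constructor
  · rintro ⟨x, rfl, rfl⟩
    exact ⟨g x, hflip x, by simp [Sym2.eq_swap]⟩
  · rintro ⟨y, hy, rfl⟩
    refine ⟨g.symm y, ?_, by simp [Sym2.eq_swap]⟩
    have h := hflip (g.symm y)
    rw [apply_symm_apply, hy] at h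
    exact (Bool.not_inj h).symm

theorem isPerfectMatching_edgesFrom {g : Perm W} (hg : ∀ x, G.Adj x (g x)) (b : Bool) :
    IsPerfectMatching G (C.edgesFrom g b) := by
  refine .of_existsUnique_partner (by rintro _ ⟨x, -, rfl⟩; exact hg x) fun v => ?_
  by_cases hv : C v = b
  · simpa only [mk_mem_edgesFrom_iff hg hv] using existsUnique_eq
  · have hg' (x : W) : G.Adj x (g.symm x) := by simpa using (hg (g.symm x)).symm
    rw [edgesFrom_eq_edgesFrom_symm hg]
    simpa only [mk_mem_edgesFrom_iff hg' (Bool.eq_not_of_ne hv)] using existsUnique_eq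

theorem adj_permOfMatchings {M : Bool → Set (Sym2 W)} (hM : ∀ b, IsPerfectMatching G (M b))
    (v : W) : G.Adj v (C.permOfMatchings hM v) :=
  (hM _).adj_partner v

end

noncomputable def adjPermEquiv (C : G.Coloring Bool) :
    {g : Perm W // ∀ x, G.Adj x (g x)} ≃ (Bool → {M // IsPerfectMatching G M}) where
  toFun g b := ⟨C.edgesFrom g.1 b, isPerfectMatching_edgesFrom g.2 b⟩
  invFun M := ⟨C.permOfMatchings fun b => (M b).2, adj_permOfMatchings _⟩
  left_inv g := Subtype.ext <| Equiv.ext fun v =>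
    ((isPerfectMatching_edgesFrom g.2 _).eq_partner_of_mk_mem
      ((mk_mem_edgesFrom_iff g.2 rfl).2 rfl)).symm
  right_inv M := funext fun b => Subtype.ext <| by
    dsimp only
    refine (isPerfectMatching_edgesFrom (adj_permOfMatchings _) b).eq_of_subset (M b).2 ?_
    rintro _ ⟨x, rfl, rfl⟩
    exact (M (C x)).2.mk_partner_mem x

end SimpleGraph.Coloring

namespace SimpleGraph

theorem Colorable.card_adjPerm_eq_sq {W : Type*} {G : SimpleGraph W} (hG : G.Colorable 2) :
    Nat.card {g : Perm W // ∀ x, G.Adj x (g x)} = Nat.card {M // IsPerfectMatching G M} ^ 2 := by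
  obtain ⟨C⟩ := hG
  rw [Nat.card_congr (G.recolorOfEquiv finTwoEquiv C).adjPermEquiv, Nat.card_fun,
    Nat.card_eq_fintype_card (α := Bool), Fintype.card_bool]

theorem colorable_two_of_addMonoidHom {V : Type*} [AddGroup V] {G : SimpleGraph V}
    (φ : V →+ ZMod 2) (hφ : ∀ x y, G.Adj x y → φ (x - y) = 1) : G.Colorable 2 :=
  ⟨.mk (fun x => φ x) fun {x y} hxy h => by simpa [h] using hφ x y hxy⟩

end SimpleGraph

def torusParity {n : ℕ} (h : 2 ∣ n) : ZMod n × ZMod n →+ ZMod 2 :=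
  (ZMod.castHom h (ZMod 2)).toAddMonoidHom.coprod (ZMod.castHom h (ZMod 2)).toAddMonoidHom

theorem torusParity_eq_one {n : ℕ} (h : 2 ∣ n) {d : ZMod n × ZMod n}
    (hd : d ∈ (fun p : ℤ × ℤ => ((p.1 : ZMod n), (p.2 : ZMod n))) '' A_plus) :
    torusParity h d = 1 := by
  obtain ⟨p, hp, rfl⟩ := hd
  simp only [A_plus, Set.mem_insert_iff, Set.mem_singleton_iff] at hp
  rcases hp with rfl | rfl | rfl | rfl <;>
  · simp only [torusParity, AddMonoidHom.coprod_apply, RingHom.toAddMonoidHom_eq_coe,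
      AddMonoidHom.coe_coe, Int.cast_one, Int.cast_neg, Int.cast_zero, map_one, map_neg, map_zero]
    decide

theorem torus_restricted_permutations_eq_sq_torus_matchings_general
    (n : ℕ) (hev : Even n)
    (T : SimpleGraph (ZMod n × ZMod n))
    (hT : ∀ x y : ZMod n × ZMod n, T.Adj x y ↔
      x - y ∈ (fun p : ℤ × ℤ => ((p.1 : ZMod n), (p.2 : ZMod n))) '' A_plus) :
    Fplus n =
      (Set.ncard {M : Set (Sym2 (ZMod n × ZMod n)) | IsPerfectMatching T M}) ^ 2 := by
  have hT₂ : T.Colorable 2 := colorable_two_of_addMonoidHom (torusParity hev.two_dvd)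
    fun x y hxy => torusParity_eq_one _ ((hT x y).1 hxy)
  have hperm : {g : Perm (ZMod n × ZMod n) |
      ∀ x, g x - x ∈ (fun p : ℤ × ℤ => ((p.1 : ZMod n), (p.2 : ZMod n))) '' A_plus} =
      {g | ∀ x, T.Adj x (g x)} := by
    ext g
    simp only [Set.mem_ofPred_eq, ← hT, T.adj_comm]
  rw [Fplus, hperm, ← Nat.card_coe_set_eq, ← Nat.card_coe_set_eq]
  exact hT₂.card_adjPerm_eq_sq

/-- for even `n ≥ 4`, the number of `A_+`-restricted permutations of the
discrete torus `(ℤ/nℤ)²` equals the square of the number of perfect matchings of the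
`n×n` torus grid graph `T_n`. -/
theorem torus_restricted_permutations_eq_sq_torus_matchings
    (n : ℕ) (hn : 4 ≤ n) (hev : Even n)
    (T : SimpleGraph (ZMod n × ZMod n))
    (hT : ∀ x y : ZMod n × ZMod n, T.Adj x y ↔
      x - y ∈ (fun p : ℤ × ℤ => ((p.1 : ZMod n), (p.2 : ZMod n))) '' A_plus) :
    Fplus n =
      (Set.ncard {M : Set (Sym2 (ZMod n × ZMod n)) | IsPerfectMatching T M}) ^ 2 :=
  torus_restricted_permutations_eq_sq_torus_matchings_general n hev T hT
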